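/- Let S be a countable semigroup and τ an equivalence relation on S all of whose classes are finite. Then the quotient S^n/#_{S,τ,n} is finite for every n ≥ 1 if and only if S is ℵ₀-categorical and the set of cardinalities {|mτ| : m ∈ S} is finite. -/

import Mathlib

/-!
An automorphism mapping the `τ`-classes of the entries of `b` onto those of `a` maps some
tuple `τ`-close to `b` onto `a`. Since `τ`-classes are finite, finitely many `#`-class
representatives thus give finitely many orbit representatives; and the size of the `τ`-class
of `m` is an invariant of the `#`-class of the `1`-tuple `m`.
Conversely, if all `τ`-classes have at most `N` elements, enumerate each class by some
`Fin N → S` and encode an `n`-tuple by the `nN`-tuple listing the classes of its entries: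
an automorphism relating two codes maps the enumerations onto each other, hence the classes,
so finitely many orbits on `nN`-tuples give finitely many `#`-classes on `n`-tuples.
-/

/-- Two `n`-tuples of a semigroup are automorphically equivalent if some semigroup
automorphism maps one to the other componentwise. -/
def AutRel (S : Type*) [Semigroup S] {n : ℕ} (a b : Fin n → S) : Prop :=
  ∃ φ : S ≃* S, ∀ k, φ (a k) = b k

/-- A semigroup is ℵ₀-categorical if, for every `n ≥ 1`, the action of its automorphism
group on `n`-tuples has only finitely many orbits. -/
def Aleph0Categorical (S : Type*) [Semigroup S] : Prop :=
  ∀ n : ℕ, 1 ≤ n → ∃ t : Set (Fin n → S), t.Finite ∧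
    ∀ a : Fin n → S, ∃ b ∈ t, AutRel S b a

/-- The relation `#_{S,τ,n}`: two `n`-tuples are related iff some automorphism of `S`
maps the `τ`-class of the `k`-th entry of the first onto the `τ`-class of the `k`-th
entry of the second, for every `k`. -/
def HashRel (S : Type*) [Semigroup S] (τ : Setoid S) {n : ℕ} (a b : Fin n → S) : Prop :=
  ∃ φ : S ≃* S, ∀ k, φ '' {x : S | τ.r (a k) x} = {x : S | τ.r (b k) x}

def FinitelyManyClasses {α : Type*} (r : α → α → Prop) : Prop :=
  ∃ t : Set α, t.Finite ∧ ∀ a, ∃ b ∈ t, r b a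

namespace FinitelyManyClasses

variable {α β γ : Type*} {r r' : α → α → Prop}

theorem of_exists_finite (h : FinitelyManyClasses r) (F : α → Set α)
    (hF : ∀ b, (F b).Finite) (hrel : ∀ b a, r b a → ∃ c ∈ F b, r' c a) :
    FinitelyManyClasses r' := by
  obtain ⟨t, ht, hcover⟩ := h
  refine ⟨⋃ b ∈ t, F b, ht.biUnion fun b _ => hF b, fun a => ?_⟩
  obtain ⟨b, hb, hba⟩ := hcover a
  obtain ⟨c, hc, hca⟩ := hrel b a hba
  exact ⟨c, Set.mem_biUnion hb hc, hca⟩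

theorem finite_range_of_invariant (h : FinitelyManyClasses r) (f : α → γ)
    (hf : ∀ b a, r b a → f b = f a) : (Set.range f).Finite := by
  obtain ⟨t, ht, hcover⟩ := h
  refine (ht.image f).subset ?_
  rintro _ ⟨a, rfl⟩
  obtain ⟨b, hb, hba⟩ := hcover a
  exact ⟨b, hb, hf b a hba⟩

theorem of_comap {s : β → β → Prop} (h : FinitelyManyClasses s) (E : α → β)
    (hE : ∀ a' a d, s d (E a') → s d (E a) → r a' a) : FinitelyManyClasses r := by
  obtain ⟨t, ht, hcover⟩ := h
  have : Finite t := ht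
  let t₀ := {d : t | ∃ a, s d (E a)}
  choose g hg using fun d : t₀ => d.2
  refine ⟨Set.range g, Set.finite_range g, fun a => ?_⟩
  obtain ⟨d, hd, hda⟩ := hcover (E a)
  let d₀ : t₀ := ⟨⟨d, hd⟩, a, hda⟩
  exact ⟨g d₀, Set.mem_range_self d₀, hE _ a d (hg d₀) hda⟩

end FinitelyManyClasses

theorem Set.Finite.exists_fin_range_eq {α : Type*} {s : Set α} (hs : s.Finite)
    (hne : s.Nonempty) {N : ℕ} (hN : Nat.card s ≤ N) : ∃ f : Fin N → α, Set.range f = s := by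
  have : Finite s := hs
  have : Nonempty s := hne.to_subtype
  let g : s ↪ Fin N := (Finite.equivFin s).toEmbedding.trans (Fin.castLEEmb hN)
  refine ⟨Subtype.val ∘ Function.invFun g, ?_⟩
  rw [Set.range_comp, (Function.invFun_surjective g.injective).range_eq, Set.image_univ,
    Subtype.range_coe]

namespace HashRel

variable {S : Type*} [Semigroup S] {τ : Setoid S} {n : ℕ} {a b : Fin n → S}

theorem exists_autRel (h : HashRel S τ b a) :
    ∃ c, (∀ k, τ.r (b k) (c k)) ∧ AutRel S c a := by
  obtain ⟨φ, hφ⟩ := h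
  have hmem : ∀ k, a k ∈ φ '' {x | τ.r (b k) x} := fun k => by
    rw [hφ k]
    exact τ.refl (a k)
  choose c hc hφc using hmem
  exact ⟨c, hc, φ, hφc⟩

theorem mk_class_eq (h : HashRel S τ b a) (k : Fin n) :
    Cardinal.mk {x | τ.r (b k) x} = Cardinal.mk {x | τ.r (a k) x} := by
  obtain ⟨φ, hφ⟩ := h
  rw [← hφ k, Cardinal.mk_image_eq φ.injective]

end HashRel

def enumTuple {S : Type*} {n N : ℕ} (e : S → Fin N → S) (a : Fin n → S) : Fin (n * N) → S :=
  fun j => e (a (finProdFinEquiv.symm j).1) (finProdFinEquiv.symm j).2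

theorem hashRel_of_autRel_enumTuple {S : Type*} [Semigroup S] {τ : Setoid S} {n N : ℕ}
    {e : S → Fin N → S} (he : ∀ m, Set.range (e m) = {x | τ.r m x}) {a' a : Fin n → S}
    {d : Fin (n * N) → S} (ha' : AutRel S d (enumTuple e a')) (ha : AutRel S d (enumTuple e a)) :
    HashRel S τ a' a := by
  obtain ⟨φ', hφ'⟩ := ha'
  obtain ⟨φ, hφ⟩ := ha
  refine ⟨φ'.symm.trans φ, fun k => ?_⟩
  have hcomp : ⇑(φ'.symm.trans φ) ∘ e (a' k) = e (a k) := funext fun i => by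
    have hd' := hφ' (finProdFinEquiv (k, i))
    have hd := hφ (finProdFinEquiv (k, i))
    simp only [enumTuple, Equiv.symm_apply_apply] at hd' hd
    simp [← hd', hd]
  rw [← he, ← he, ← Set.range_comp, hcomp]

theorem hashRel_finite_iff (S : Type*) [Semigroup S] (τ : Setoid S)
    (hfin : ∀ m : S, {x : S | τ.r m x}.Finite) :
    (∀ n : ℕ, 1 ≤ n → ∃ t : Set (Fin n → S), t.Finite ∧
        ∀ a : Fin n → S, ∃ b ∈ t, HashRel S τ b a) ↔
      (Aleph0Categorical S ∧ (Set.range fun m : S => Cardinal.mk {x : S | τ.r m x}).Finite) := by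
  constructor
  · intro H
    refine ⟨fun n hn => FinitelyManyClasses.of_exists_finite (H n hn)
      (fun b => Set.univ.pi fun k => {x | τ.r (b k) x}) (fun b => Set.Finite.pi fun k => hfin (b k))
      fun b a hba => ?_, ?_⟩
    · obtain ⟨c, hc, hca⟩ := hba.exists_autRel
      exact ⟨c, Set.mem_univ_pi.2 hc, hca⟩
    · refine (FinitelyManyClasses.finite_range_of_invariant (H 1 le_rfl)
        (fun b => Cardinal.mk {x | τ.r (b 0) x}) fun b a hba => hba.mk_class_eq 0).subset ?_
      rintro _ ⟨m, rfl⟩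
      exact ⟨fun _ => m, rfl⟩
  · rintro ⟨hcat, hcard⟩ n hn
    obtain ⟨B, hB⟩ := (hcard.image Cardinal.toNat).bddAbove
    -- enumerating by `Fin (B + 1)` keeps the code length `n * (B + 1)` positive
    have henum : ∀ m, ∃ f : Fin (B + 1) → S, Set.range f = {x | τ.r m x} := fun m =>
      (hfin m).exists_fin_range_eq ⟨m, τ.refl m⟩ ((hB ⟨_, ⟨m, rfl⟩, rfl⟩).trans B.le_succ)
    choose e he using henum
    exact FinitelyManyClasses.of_comap (hcat (n * (B + 1)) (Nat.mul_pos hn B.succ_pos))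
      (enumTuple e) fun a' a d => hashRel_of_autRel_enumTuple he
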